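/- Let H be a densely defined self-adjoint operator on ℋ and A a Hilbert–Schmidt operator on ℋ. Consider the conditions: (a) A maps ℋ into Dom H and both HA and HA* are (everywhere-defined) Hilbert–Schmidt operators; (b) A maps ℋ into Dom H, HA is Hilbert–Schmidt, and the closure overline(AH) of the operator AH (defined on Dom H) is Hilbert–Schmidt; (c) both closures overline(HA) and overline(AH) are Hilbert–Schmidt. Then (a), (b), and (c) are pairwise equivalent. -/

import Mathlib

open Filter Topology ContinuousLinearMap
open scoped InnerProductSpace

noncomputable section

namespace LiouvilleFormalization

variable {H : Type*} [NormedAddCommGroup H] [InnerProductSpace ℂ H] [CompleteSpace H]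

/-- `A` is Hilbert–Schmidt with respect to the orthonormal basis `e`
(equivalently, with respect to every orthonormal basis). -/
def IsHS (e : HilbertBasis ℕ ℂ H) (A : H →L[ℂ] H) : Prop :=
  Summable fun n => ‖A (e n)‖ ^ 2

/-- The Hilbert–Schmidt norm of `A` computed in the orthonormal basis `e`. -/
def hsNorm (e : HilbertBasis ℕ ℂ H) (A : H →L[ℂ] H) : ℝ :=
  Real.sqrt (∑' n, ‖A (e n)‖ ^ 2)

/-- The Hilbert–Schmidt inner product `⟨A, B⟩_HS = Σₙ ⟨A eₙ, B eₙ⟩`. -/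
def hsInner (e : HilbertBasis ℕ ℂ H) (A B : H →L[ℂ] H) : ℂ :=
  ∑' n, (inner ℂ (A (e n)) (B (e n)) : ℂ)

/-- The conjugation superoperator `A ↦ U(t) A U(t)*`. -/
def conjSup (U : ℝ → H →L[ℂ] H) (t : ℝ) (A : H →L[ℂ] H) : H →L[ℂ] H :=
  U t ∘L A ∘L adjoint (U t)

/-- `U` is a strongly continuous one-parameter unitary group. -/
structure IsUnitaryGroup (U : ℝ → H →L[ℂ] H) : Prop where
  map_zero : U 0 = 1
  map_add : ∀ t s : ℝ, U (t + s) = U t ∘L U s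
  unitary_left : ∀ t : ℝ, adjoint (U t) ∘L U t = 1
  unitary_right : ∀ t : ℝ, U t ∘L adjoint (U t) = 1
  strong_continuous : ∀ ψ : H, Continuous fun t : ℝ => U t ψ

/-- A densely defined operator is self-adjoint if it coincides with its adjoint. -/
def IsSelfAdjointOp (T : H →ₗ.[ℂ] H) : Prop :=
  Dense (T.domain : Set H) ∧ T.adjoint = T

/-- `T` is the infinitesimal generator of the unitary group `U`, i.e. `U(t) = e^{-itT}`:
the domain of `T` is exactly the set of vectors where the strong derivative at `t = 0`
exists, and there the derivative equals `-i T ψ`. -/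
structure IsGenerator (U : ℝ → H →L[ℂ] H) (T : H →ₗ.[ℂ] H) : Prop where
  mem_dom : ∀ ψ : H,
    ψ ∈ T.domain ↔ ∃ L : H, Tendsto (fun t : ℝ => t⁻¹ • (U t ψ - ψ)) (𝓝[≠] 0) (𝓝 L)
  deriv : ∀ ψ : T.domain,
    Tendsto (fun t : ℝ => t⁻¹ • (U t ψ - (ψ : H))) (𝓝[≠] 0) (𝓝 ((-Complex.I) • T ψ))

/-- `L = 𝐇 A`: membership of `A` in the domain of the Liouville superoperator `𝐇`
generated by `U`, together with the value `𝐇 A = L`: the difference quotient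
`(U(t) A U(t)* - A)/t` converges in Hilbert–Schmidt norm to `-i L`. -/
def HasLiouville (e : HilbertBasis ℕ ℂ H) (U : ℝ → H →L[ℂ] H) (A L : H →L[ℂ] H) : Prop :=
  IsHS e A ∧ IsHS e L ∧
    Tendsto (fun t : ℝ => hsNorm e (t⁻¹ • (conjSup U t A - A) - (-Complex.I) • L))
      (𝓝[≠] 0) (𝓝 0)

/-- The commutator `[T, A] ψ = T(Aψ) - A(Tψ)` on the domain of `T`, for `A` mapping
`Dom T` into itself. -/
def commAt (T : H →ₗ.[ℂ] H) (A : H →L[ℂ] H)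
    (hm : ∀ x : T.domain, (A x : H) ∈ T.domain) (ψ : T.domain) : H :=
  T ⟨A ψ, hm ψ⟩ - A (T ψ)

/-- Condition (a): `A ℋ ⊆ Dom H` and both `HA` and `HA*` are everywhere defined
Hilbert–Schmidt operators. -/
def CondA (e : HilbertBasis ℕ ℂ H) (T : H →ₗ.[ℂ] H) (A : H →L[ℂ] H) : Prop :=
  ∃ (h : ∀ φ : H, A φ ∈ T.domain) (h' : ∀ φ : H, adjoint A φ ∈ T.domain)
    (B B' : H →L[ℂ] H), IsHS e B ∧ IsHS e B' ∧
    (∀ φ : H, B φ = T ⟨A φ, h φ⟩) ∧ (∀ φ : H, B' φ = T ⟨adjoint A φ, h' φ⟩)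

/-- Condition (b): `A ℋ ⊆ Dom H`, `HA` is Hilbert–Schmidt, and the closure of `AH`
(the continuous `C` agreeing with `AH` on `Dom H`) is Hilbert–Schmidt. -/
def CondB (e : HilbertBasis ℕ ℂ H) (T : H →ₗ.[ℂ] H) (A : H →L[ℂ] H) : Prop :=
  (∃ (h : ∀ φ : H, A φ ∈ T.domain) (B : H →L[ℂ] H),
    IsHS e B ∧ ∀ φ : H, B φ = T ⟨A φ, h φ⟩) ∧
  ∃ C : H →L[ℂ] H, IsHS e C ∧ ∀ ψ : T.domain, C ψ = A (T ψ)

/-- Condition (c): both closures `overline(HA)` and `overline(AH)` are Hilbert–Schmidt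
(`HA` being densely defined, with domain `{φ : Aφ ∈ Dom H}`). -/
def CondC (e : HilbertBasis ℕ ℂ H) (T : H →ₗ.[ℂ] H) (A : H →L[ℂ] H) : Prop :=
  Dense {φ : H | A φ ∈ T.domain} ∧
  (∃ B : H →L[ℂ] H, IsHS e B ∧ ∀ (φ : H) (h : A φ ∈ T.domain), B φ = T ⟨A φ, h⟩) ∧
  ∃ C : H →L[ℂ] H, IsHS e C ∧ ∀ ψ : T.domain, C ψ = A (T ψ)

/-!
The Hilbert–Schmidt norm is invariant under adjoints (Parseval in each column, then swap the
double sum). For bounded `S`, `R` and self-adjoint `T`, "`S` maps into `Dom T` with `T S = R`"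
is equivalent to "`R* = S* T` on `Dom T`": one direction is the symmetry of `T`, the other is
`T* ⊆ T`, and the first only needs `T S = R` on a dense set. With `S = A*` this identifies
`overline(AT)` with `(TA*)*`, giving (a) ⇔ (b); with `S = A` it upgrades (c) to (b).
-/

open scoped ENNReal

theorem _root_.HilbertBasis.hasSum_norm_inner_sq {ι 𝕜 E : Type*} [RCLike 𝕜]
    [NormedAddCommGroup E] [InnerProductSpace 𝕜 E] (b : HilbertBasis ι 𝕜 E) (x : E) :
    HasSum (fun i => ‖⟪b i, x⟫_𝕜‖ ^ 2) (‖x‖ ^ 2) := by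
  simpa [b.repr_apply_apply] using lp.hasSum_norm (p := 2) (by norm_num) (b.repr x)

theorem _root_.HilbertBasis.tsum_enorm_inner_sq {ι 𝕜 E : Type*} [RCLike 𝕜]
    [NormedAddCommGroup E] [InnerProductSpace 𝕜 E] (b : HilbertBasis ι 𝕜 E) (x : E) :
    ∑' i, ‖⟪b i, x⟫_𝕜‖ₑ ^ 2 = ‖x‖ₑ ^ 2 := by
  simp only [← ofReal_norm, ← ENNReal.ofReal_pow (norm_nonneg _)]
  rw [← ENNReal.ofReal_tsum_of_nonneg (fun i => by positivity) (b.hasSum_norm_inner_sq x).summable,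
    (b.hasSum_norm_inner_sq x).tsum_eq]

omit [CompleteSpace H] in
theorem isHS_iff_tsum_enorm_sq_ne_top (e : HilbertBasis ℕ ℂ H) (A : H →L[ℂ] H) :
    IsHS e A ↔ ∑' n, ‖A (e n)‖ₑ ^ 2 ≠ ∞ := by
  have := ENNReal.tsum_coe_ne_top_iff_summable_coe (f := fun n => ‖A (e n)‖₊ ^ 2)
  push_cast at this
  exact this.symm

theorem tsum_enorm_adjoint_apply_sq (e : HilbertBasis ℕ ℂ H) (A : H →L[ℂ] H) :
    ∑' n, ‖adjoint A (e n)‖ₑ ^ 2 = ∑' n, ‖A (e n)‖ₑ ^ 2 :=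
  calc ∑' n, ‖adjoint A (e n)‖ₑ ^ 2
      = ∑' n, ∑' m, ‖⟪e m, adjoint A (e n)⟫_ℂ‖ₑ ^ 2 := by simp only [e.tsum_enorm_inner_sq]
    _ = ∑' n, ∑' m, ‖⟪e n, A (e m)⟫_ℂ‖ₑ ^ 2 := by
        simp only [adjoint_inner_right, ← inner_conj_symm (A _) (e _), RCLike.enorm_conj]
    _ = ∑' m, ∑' n, ‖⟪e n, A (e m)⟫_ℂ‖ₑ ^ 2 := ENNReal.tsum_comm
    _ = ∑' m, ‖A (e m)‖ₑ ^ 2 := by simp only [e.tsum_enorm_inner_sq]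

theorem IsHS.adjoint {e : HilbertBasis ℕ ℂ H} {A : H →L[ℂ] H} (hA : IsHS e A) :
    IsHS e (adjoint A) := by
  rw [isHS_iff_tsum_enorm_sq_ne_top, tsum_enorm_adjoint_apply_sq]
  exact (isHS_iff_tsum_enorm_sq_ne_top e A).1 hA

namespace IsSelfAdjointOp

variable {T : H →ₗ.[ℂ] H}

theorem isFormalAdjoint (hT : IsSelfAdjointOp T) : T.IsFormalAdjoint T := by
  have := LinearPMap.adjoint_isFormalAdjoint hT.1
  rwa [hT.2] at this

theorem exists_mem_domain_of_inner (hT : IsSelfAdjointOp T) {y w : H}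
    (h : ∀ x : T.domain, ⟪T x, y⟫_ℂ = ⟪(x : H), w⟫_ℂ) :
    ∃ hy : y ∈ T.domain, T ⟨y, hy⟩ = w := by
  have h' (x : T.domain) : ⟪w, (x : H)⟫_ℂ = ⟪y, T x⟫_ℂ := by
    rw [← inner_conj_symm, ← h, inner_conj_symm]
  have hy : y ∈ T.adjoint.domain := LinearPMap.mem_adjoint_domain_of_exists y ⟨w, h'⟩
  obtain ⟨hd, hTT⟩ := hT
  rw [← hTT]
  exact ⟨hy, LinearPMap.adjoint_apply_eq hd ⟨y, hy⟩ h'⟩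

theorem adjoint_apply_eq_of_dense (hT : IsSelfAdjointOp T) {S R : H →L[ℂ] H} {D : Set H}
    (hD : Dense D) (h : ∀ φ ∈ D, ∃ hφ : S φ ∈ T.domain, T ⟨S φ, hφ⟩ = R φ) (ψ : T.domain) :
    adjoint R ψ = adjoint S (T ψ) := by
  refine hD.eq_of_inner_left ℂ fun φ hφ => ?_
  obtain ⟨hSφ, hTSφ⟩ := h φ hφ
  rw [adjoint_inner_left, adjoint_inner_left, ← hTSφ]
  exact (hT.isFormalAdjoint ψ ⟨S φ, hSφ⟩).symm

theorem exists_mem_domain_of_adjoint_apply_eq (hT : IsSelfAdjointOp T) {S R : H →L[ℂ] H}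
    (h : ∀ ψ : T.domain, adjoint R ψ = adjoint S (T ψ)) (φ : H) :
    ∃ hφ : S φ ∈ T.domain, T ⟨S φ, hφ⟩ = R φ :=
  hT.exists_mem_domain_of_inner fun ψ => by
    rw [← adjoint_inner_left S, ← h, adjoint_inner_left]

end IsSelfAdjointOp

section Conditions

variable {e : HilbertBasis ℕ ℂ H} {T : H →ₗ.[ℂ] H} {A : H →L[ℂ] H}

theorem condA_iff_condB (hT : IsSelfAdjointOp T) : CondA e T A ↔ CondB e T A := by
  constructor
  · rintro ⟨h, h', B, B', hB, hB', hBe, hB'e⟩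
    refine ⟨⟨h, B, hB, hBe⟩, adjoint B', hB'.adjoint, fun ψ => ?_⟩
    simpa using hT.adjoint_apply_eq_of_dense dense_univ
      (fun φ _ => ⟨h' φ, (hB'e φ).symm⟩) ψ
  · rintro ⟨⟨h, B, hB, hBe⟩, C, hC, hCe⟩
    choose h' hTA using hT.exists_mem_domain_of_adjoint_apply_eq (S := adjoint A)
      (R := adjoint C) (by simpa using hCe)
    exact ⟨h, h', B, adjoint C, hB, hC.adjoint, hBe, fun φ => (hTA φ).symm⟩

theorem condB_iff_condC (hT : IsSelfAdjointOp T) : CondB e T A ↔ CondC e T A := by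
  constructor
  · rintro ⟨⟨h, B, hB, hBe⟩, hC⟩
    exact ⟨by simp [h], ⟨B, hB, fun φ _ => hBe φ⟩, hC⟩
  · rintro ⟨hD, ⟨B, hB, hBe⟩, hC⟩
    choose h hTA using hT.exists_mem_domain_of_adjoint_apply_eq
      (hT.adjoint_apply_eq_of_dense hD fun φ hφ => ⟨hφ, (hBe φ hφ).symm⟩)
    exact ⟨⟨h, B, hB, fun φ => (hTA φ).symm⟩, hC⟩

end Conditions

theorem statement11_general (e : HilbertBasis ℕ ℂ H) (T : H →ₗ.[ℂ] H) (hT : IsSelfAdjointOp T)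
    (A : H →L[ℂ] H) :
    (CondA e T A ↔ CondB e T A) ∧ (CondB e T A ↔ CondC e T A) ∧
    (CondA e T A ↔ CondC e T A) :=
  ⟨condA_iff_condB hT, condB_iff_condC hT, (condA_iff_condB hT).trans (condB_iff_condC hT)⟩

/-- conditions (a), (b), (c) are pairwise equivalent. -/
theorem statement11 (e : HilbertBasis ℕ ℂ H) (T : H →ₗ.[ℂ] H) (hT : IsSelfAdjointOp T)
    (A : H →L[ℂ] H) (hA : IsHS e A) :
    (CondA e T A ↔ CondB e T A) ∧ (CondB e T A ↔ CondC e T A) ∧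
    (CondA e T A ↔ CondC e T A) :=
  statement11_general e T hT A

end LiouvilleFormalization
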